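/- Let p ≥ 0 be an integer, let c > 0, set k = 2p + 3, let n ≥ k, and let x_1 < ⋯ < x_n be distinct real numbers. Define n functions φ_1, …, φ_n : ℝ → ℝ as follows: for i = 1, …, (k−1)/2, let φ_i(x) = Σ_{j=1}^{(k−1)/2 + i} A^{(i)}_j K(x, x_j) where (A^{(i)}_j) is a nonzero solution of the left-sided kernel packet system on the points x_1, …, x_{(k−1)/2 + i}; for i = (k+1)/2, …, n − (k−1)/2, let φ_i(x) = Σ_{j=i−(k−1)/2}^{i+(k−1)/2} A^{(i)}_j K(x, x_j) where (A^{(i)}_j) is a nonzero solution of the kernel packet system on the k consecutive points x_{i−(k−1)/2}, …, x_{i+(k−1)/2}; and for i = n − (k−3)/2, …, n, let φ_i(x) = Σ_{j=i−(k−1)/2}^{n} A^{(i)}_j K(x, x_j) where (A^{(i)}_j) is a nonzero solution of the right-sided kernel packet system on the points x_{i−(k−1)/2}, …, x_n. Then the functions φ_1, …, φ_n are linearly independent over ℝ. -/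

import Mathlib

/-!
If `∑ gᵢ φᵢ = 0` then `∑ⱼ bⱼ K(·, xⱼ) = 0` with `b = gᵀA`. Between two consecutive nodes this
function is `Q(y) e^{cy} + P(y) e^{-cy}` with polynomials `P, Q`, and by a Rolle-type zero count
such an exponential polynomial vanishes on an interval only if `P = Q = 0`. Crossing the node `x_m`
changes `P` by `b_m e^{c x_m} P_p(y - x_m)`, so `b = 0`, and it remains to show that the rows of
`A` are linearly independent.

By the same zero count, the functions `x^l e^{cx}` (`l < a`) and `x^r e^{-cx}` (`r < b`)
interpolate arbitrary data on `a + b` nodes, so a vector supported on at most `a + b` nodes that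
annihilates all of them is zero. Each row of `A` satisfies one equation fewer than the size of its
support, so the next coordinate (left and middle rows) or the next exponential moment (right rows)
does not vanish on it, while it vanishes on all earlier rows: the rows are triangular with respect
to these functionals.
-/

/-- The polynomial factor `P_p(u) = (p! / (2p)!) ∑_{j=0}^{p} ((p+j)! / (j! (p-j)!)) (2cu)^{p-j}`
appearing in the half-integer Matérn kernel. -/
noncomputable def maternPoly (p : ℕ) (c : ℝ) (u : ℝ) : ℝ :=
  ((p.factorial : ℝ) / ((2 * p).factorial : ℝ)) *
    ∑ j ∈ Finset.range (p + 1),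
      (((p + j).factorial : ℝ) / ((j.factorial : ℝ) * ((p - j).factorial : ℝ))) *
        (2 * c * u) ^ (p - j)

/-- The half-integer Matérn kernel with smoothness `ν = p + 1/2`:
`K(x, x') = P_p(|x - x'|) exp (-c |x - x'|)`. -/
noncomputable def maternKernel (p : ℕ) (c : ℝ) (x x' : ℝ) : ℝ :=
  maternPoly p c |x - x'| * Real.exp (-(c * |x - x'|))

open Polynomial Finset

theorem encard_setOf_eq_zero_le_encard_setOf_deriv_eq_zero_add_one {f : ℝ → ℝ}
    (hf : Continuous f) :
    {x | f x = 0}.encard ≤ {x | deriv f x = 0}.encard + 1 := by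
  obtain hinf | hfin := {x | deriv f x = 0}.infinite_or_finite
  · simp [hinf.encard_eq]
  by_contra! hlt
  obtain ⟨T, hTsub, hTcard⟩ := Set.exists_subset_encard_eq (Order.add_one_le_of_lt hlt)
  rw [hfin.encard_eq_coe_toFinset_card] at hTcard
  have hTfin : T.Finite := Set.finite_of_encard_eq_coe (k := #hfin.toFinset + 2) hTcard
  have hinterleaved := Finset.card_le_of_interleaved (s := hTfin.toFinset) (t := hfin.toFinset)
    fun a ha b hb hab _ => by
      rw [Set.Finite.mem_toFinset] at ha hb
      obtain ⟨z, hz, hfz⟩ := exists_deriv_eq_zero hab hf.continuousOn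
        ((hTsub ha).trans (hTsub hb).symm)
      exact ⟨z, by simpa using hfz, hz⟩
  rw [hTfin.encard_eq_coe_toFinset_card] at hTcard
  norm_cast at hTcard
  omega

theorem hasDerivAt_eval_mul_exp_add_eval (ε : ℝ) (P Q : ℝ[X]) (x : ℝ) :
    HasDerivAt (fun x => P.eval x * Real.exp (ε * x) + Q.eval x)
      ((derivative P + C ε * P).eval x * Real.exp (ε * x) + (derivative Q).eval x) x := by
  have hexp : HasDerivAt (fun x => Real.exp (ε * x)) (Real.exp (ε * x) * ε) x := by
    simpa using ((hasDerivAt_id x).const_mul ε).exp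
  refine (((P.hasDerivAt x).mul hexp).add (Q.hasDerivAt x)).congr_deriv ?_
  rw [eval_add, eval_mul, eval_C]
  ring

theorem degree_derivative_add_C_mul {ε : ℝ} (hε : ε ≠ 0) {P : ℝ[X]} (hP : P ≠ 0) :
    (derivative P + C ε * P).degree = P.degree := by
  rw [degree_add_eq_right_of_degree_lt] <;> rw [degree_C_mul hε]
  exact degree_derivative_lt hP

/-- Induction on `d`: differentiating lowers the degree of `Q` and, by Rolle, loses at most
one zero. -/
theorem encard_setOf_eval_mul_exp_add_eval_eq_zero_le {ε : ℝ} (hε : ε ≠ 0) (d : ℕ)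
    {P Q : ℝ[X]} (hP : P ≠ 0) (hQ : Q.degree < d) :
    {x | P.eval x * Real.exp (ε * x) + Q.eval x = 0}.encard ≤ P.natDegree + d := by
  induction d generalizing P Q with
  | zero =>
    rw [Nat.cast_zero, Nat.WithBot.lt_zero_iff, degree_eq_bot] at hQ
    have hsub : {x | P.eval x * Real.exp (ε * x) + Q.eval x = 0} ⊆ P.roots.toFinset := by
      intro x hx
      simpa [hQ, Real.exp_ne_zero, hP] using hx
    calc _ ≤ (P.roots.toFinset : Set ℝ).encard := Set.encard_le_encard hsub
      _ ≤ P.natDegree := by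
        rw [Set.encard_coe_eq_coe_finsetCard]
        exact_mod_cast (Multiset.toFinset_card_le _).trans (card_roots' P)
  | succ d ih =>
    have hdeg := degree_derivative_add_C_mul hε hP
    have hQ' : (derivative Q).degree < d := by
      rcases eq_or_ne Q 0 with rfl | hQ0
      · simp
      · exact (degree_derivative_lt hQ0).trans_le (Order.le_of_lt_succ hQ)
    have hderiv : deriv (fun x => P.eval x * Real.exp (ε * x) + Q.eval x) =
        fun x => (derivative P + C ε * P).eval x * Real.exp (ε * x) + (derivative Q).eval x :=
      funext fun x => (hasDerivAt_eval_mul_exp_add_eval ε P Q x).deriv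
    calc _ ≤ {x | deriv (fun x => P.eval x * Real.exp (ε * x) + Q.eval x) x = 0}.encard + 1 :=
          encard_setOf_eq_zero_le_encard_setOf_deriv_eq_zero_add_one (by fun_prop)
      _ ≤ ((derivative P + C ε * P).natDegree + d : ℕ∞) + 1 := by
          rw [hderiv]
          gcongr
          exact ih (by rwa [← degree_ne_bot, hdeg, degree_ne_bot]) hQ'
      _ = P.natDegree + (d + 1 : ℕ) := by
          rw [natDegree_eq_of_degree_eq hdeg]
          push_cast
          ring

theorem encard_setOf_eval_mul_exp_add_eval_mul_exp_neg_eq_zero_lt {c : ℝ} (hc : c ≠ 0)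
    {a b : ℕ} {P Q : ℝ[X]} (hP : P.degree < a) (hQ : Q.degree < b) (hPQ : P ≠ 0 ∨ Q ≠ 0) :
    {x | P.eval x * Real.exp (c * x) + Q.eval x * Real.exp (-(c * x)) = 0}.encard < a + b := by
  wlog hP0 : P ≠ 0 generalizing c a b P Q
  · have hQ0 : Q ≠ 0 := hPQ.resolve_left hP0
    have hsymm := this (neg_ne_zero.2 hc) hQ hP (Or.inl hQ0) hQ0
    simp only [neg_mul, neg_neg, add_comm (Q.eval _ * _)] at hsymm
    rwa [add_comm (a : ℕ∞)]
  have hzeros : {x | P.eval x * Real.exp (c * x) + Q.eval x * Real.exp (-(c * x)) = 0} =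
      {x | P.eval x * Real.exp (2 * c * x) + Q.eval x = 0} := by
    ext x
    have hfactor : P.eval x * Real.exp (c * x) + Q.eval x * Real.exp (-(c * x)) =
        Real.exp (-(c * x)) * (P.eval x * Real.exp (2 * c * x) + Q.eval x) := by
      rw [mul_add, mul_left_comm, ← Real.exp_add]
      ring_nf
    simp [hfactor, Real.exp_ne_zero]
  rw [hzeros]
  calc _ ≤ (P.natDegree + b : ℕ∞) :=
        encard_setOf_eval_mul_exp_add_eval_eq_zero_le (mul_ne_zero two_ne_zero hc) b hP0 hQ
    _ < a + b := by
        have := (natDegree_lt_iff_degree_lt hP0).2 hP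
        exact_mod_cast (by omega : P.natDegree + b < a + b)

theorem eq_zero_of_eval_mul_exp_add_eval_mul_exp_neg_eq_zero {c : ℝ} (hc : c ≠ 0)
    {P Q : ℝ[X]} {I : Set ℝ} (hI : I.Infinite)
    (h : ∀ x ∈ I, P.eval x * Real.exp (c * x) + Q.eval x * Real.exp (-(c * x)) = 0) :
    P = 0 ∧ Q = 0 := by
  by_contra! hPQ
  have hlt := encard_setOf_eval_mul_exp_add_eval_mul_exp_neg_eq_zero_lt hc
    (degree_le_natDegree.trans_lt (by exact_mod_cast P.natDegree.lt_succ_self))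
    (degree_le_natDegree.trans_lt (by exact_mod_cast Q.natDegree.lt_succ_self))
    (or_iff_not_imp_left.2 fun hP => hPQ (not_not.1 hP))
  have hzeros : {x | P.eval x * Real.exp (c * x) + Q.eval x * Real.exp (-(c * x)) = 0}.Infinite :=
    hI.mono h
  rw [hzeros.encard_eq] at hlt
  exact not_top_lt hlt

theorem exists_eval_mul_exp_add_eval_mul_exp_neg_eq {c : ℝ} (hc : c ≠ 0) {a b : ℕ}
    (T : Finset ℝ) (hT : #T ≤ a + b) (w : ℝ → ℝ) :
    ∃ P Q : ℝ[X], P.degree < a ∧ Q.degree < b ∧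
      ∀ t ∈ T, P.eval t * Real.exp (c * t) + Q.eval t * Real.exp (-(c * t)) = w t := by
  obtain ⟨T', hTT', hT'⟩ := Infinite.exists_superset_card_eq T (a + b) hT
  let E : (degreeLT ℝ a × degreeLT ℝ b) →ₗ[ℝ] (T' → ℝ) :=
    { toFun := fun PQ t => (PQ.1 : ℝ[X]).eval (t : ℝ) * Real.exp (c * t) +
        (PQ.2 : ℝ[X]).eval (t : ℝ) * Real.exp (-(c * t))
      map_add' := fun _ _ => by ext; simp only [Prod.fst_add, Prod.snd_add, Submodule.coe_add,
        eval_add, Pi.add_apply]; ring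
      map_smul' := fun _ _ => by ext; simp only [Prod.smul_fst, Prod.smul_snd,
        Submodule.coe_smul, eval_smul, smul_eq_mul, RingHom.id_apply, Pi.smul_apply]; ring }
  have hE : Function.Injective E := by
    refine (injective_iff_map_eq_zero E).2 fun ⟨P, Q⟩ hPQ => ?_
    by_contra hne
    have hlt := encard_setOf_eval_mul_exp_add_eval_mul_exp_neg_eq_zero_lt hc
      (mem_degreeLT.1 P.2) (mem_degreeLT.1 Q.2) (by
        by_contra! h
        exact hne (Prod.ext (Subtype.ext h.1) (Subtype.ext h.2)))
    have hsub : (T' : Set ℝ) ⊆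
        {x | (P : ℝ[X]).eval x * Real.exp (c * x) + (Q : ℝ[X]).eval x * Real.exp (-(c * x)) = 0} :=
      fun t ht => congrFun hPQ ⟨t, ht⟩
    have hle := Set.encard_le_encard hsub
    rw [Set.encard_coe_eq_coe_finsetCard, hT', Nat.cast_add] at hle
    exact hle.not_gt hlt
  have hrank : Module.finrank ℝ (degreeLT ℝ a × degreeLT ℝ b) = Module.finrank ℝ (T' → ℝ) := by
    rw [Module.finrank_prod, (degreeLTEquiv ℝ a).finrank_eq, (degreeLTEquiv ℝ b).finrank_eq]
    simp [hT']
  obtain ⟨⟨P, Q⟩, hPQ⟩ := (LinearMap.injective_iff_surjective_of_finrank_eq_finrank hrank).1 hE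
    fun t => w t
  exact ⟨P, Q, mem_degreeLT.1 P.2, mem_degreeLT.1 Q.2, fun t ht => congrFun hPQ ⟨t, hTT' ht⟩⟩

theorem sum_mul_eval_mul_eq_zero {ι R : Type*} [Fintype ι] [CommRing R] {z v : ι → R}
    {g : R → R} {a : ℕ} (h : ∀ l < a, ∑ j, v j * z j ^ l * g (z j) = 0)
    {P : R[X]} (hP : P.degree < a) :
    ∑ j, v j * P.eval (z j) * g (z j) = 0 := by
  simp_rw [eval_eq_sum_degreeLTEquiv (mem_degreeLT.2 hP), mul_sum, sum_mul]
  rw [sum_comm]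
  refine sum_eq_zero fun l _ => ?_
  rw [← mul_zero (degreeLTEquiv R a ⟨P, mem_degreeLT.2 hP⟩ l), ← h l l.2, mul_sum]
  exact sum_congr rfl fun j _ => by ring

theorem eq_zero_of_sum_mul_pow_mul_exp_eq_zero {ι : Type*} [Fintype ι] {c : ℝ} (hc : c ≠ 0)
    {z : ι → ℝ} (hz : Function.Injective z) {v : ι → ℝ} {S : Finset ι} (hv : ∀ j ∉ S, v j = 0)
    {a b : ℕ} (hS : #S ≤ a + b)
    (hpos : ∀ l < a, ∑ j, v j * z j ^ l * Real.exp (c * z j) = 0)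
    (hneg : ∀ r < b, ∑ j, v j * z j ^ r * Real.exp (-(c * z j)) = 0) :
    v = 0 := by
  classical
  funext j₀
  by_cases hj₀ : j₀ ∉ S
  · exact hv j₀ hj₀
  rw [not_not] at hj₀
  obtain ⟨P, Q, hP, hQ, hPQ⟩ := exists_eval_mul_exp_add_eval_mul_exp_neg_eq hc (S.image z)
    (card_image_le.trans hS) fun t => if t = z j₀ then 1 else 0
  have hzero : ∑ j, v j * (P.eval (z j) * Real.exp (c * z j) +
      Q.eval (z j) * Real.exp (-(c * z j))) = 0 := by
    have hposP : ∑ j, v j * P.eval (z j) * Real.exp (c * z j) = 0 :=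
      sum_mul_eval_mul_eq_zero (g := fun t => Real.exp (c * t)) hpos hP
    have hnegQ : ∑ j, v j * Q.eval (z j) * Real.exp (-(c * z j)) = 0 :=
      sum_mul_eval_mul_eq_zero (g := fun t => Real.exp (-(c * t))) hneg hQ
    simp only [mul_add, sum_add_distrib, ← mul_assoc, hposP, hnegQ, add_zero]
  rw [Pi.zero_apply, ← hzero, sum_eq_single j₀ _ (by simp), hPQ _ (mem_image_of_mem z hj₀),
    if_pos rfl, mul_one]
  intro j _ hj
  by_cases hjS : j ∈ S
  · rw [hPQ _ (mem_image_of_mem z hjS), if_neg (hz.ne hj), mul_zero]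
  · rw [hv j hjS, zero_mul]

noncomputable def maternPolynomial (p : ℕ) (c : ℝ) : ℝ[X] :=
  C ((p.factorial : ℝ) / ((2 * p).factorial : ℝ)) *
    ∑ j ∈ range (p + 1),
      C (((p + j).factorial : ℝ) / ((j.factorial : ℝ) * ((p - j).factorial : ℝ))) *
        (C (2 * c) * X) ^ (p - j)

theorem eval_maternPolynomial (p : ℕ) (c u : ℝ) :
    (maternPolynomial p c).eval u = maternPoly p c u := by
  simp only [maternPolynomial, maternPoly, eval_mul, eval_C, eval_finsetSum, eval_pow, eval_X]

theorem maternPoly_zero (p : ℕ) (c : ℝ) : maternPoly p c 0 = 1 := by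
  rw [maternPoly, sum_range_succ, sum_eq_zero fun j hj => by
    rw [mul_zero, zero_pow (by simp at hj; omega), mul_zero]]
  rw [← two_mul, Nat.sub_self, pow_zero, Nat.factorial_zero, Nat.cast_one, mul_one, mul_one,
    zero_add]
  field_simp

theorem maternKernel_of_le (p : ℕ) (c : ℝ) {y x' : ℝ} (h : x' ≤ y) :
    maternKernel p c y x' = maternPoly p c (y - x') * Real.exp (c * x') * Real.exp (-(c * y)) := by
  rw [maternKernel, abs_of_nonneg (sub_nonneg.2 h), mul_assoc, ← Real.exp_add]
  ring_nf

theorem maternKernel_of_ge (p : ℕ) (c : ℝ) {y x' : ℝ} (h : y ≤ x') :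
    maternKernel p c y x' = maternPoly p c (x' - y) * Real.exp (-(c * x')) * Real.exp (c * y) := by
  rw [maternKernel, abs_of_nonpos (sub_nonpos.2 h), neg_sub, mul_assoc, ← Real.exp_add]
  ring_nf

theorem sum_mul_maternKernel_eq {n : ℕ} {x : Fin n → ℝ} (hx : Monotone x) (p : ℕ) (c : ℝ)
    (b : Fin n → ℝ) {m : Fin n} {y : ℝ} (hmy : x m < y) (hy : ∀ j, m < j → y < x j) :
    ∑ j, b j * maternKernel p c y (x j) =
      (∑ j ∈ Ioi m, C (b j * Real.exp (-(c * x j))) *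
        (maternPolynomial p c).comp (C (x j) - X)).eval y * Real.exp (c * y) +
      (∑ j ∈ Iic m, C (b j * Real.exp (c * x j)) *
        (maternPolynomial p c).comp (X - C (x j))).eval y * Real.exp (-(c * y)) := by
  rw [← sum_filter_add_sum_filter_not univ (m < ·), filter_lt_eq_Ioi]
  simp only [not_lt, filter_ge_eq_Iic, eval_finsetSum, sum_mul]
  congr 1 <;> refine sum_congr rfl fun j hj => ?_
  · rw [maternKernel_of_ge p c (hy j (mem_Ioi.1 hj)).le]
    simp only [eval_mul, eval_C, eval_comp, eval_sub, eval_X, eval_maternPolynomial]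
    ring
  · rw [maternKernel_of_le p c ((hx (mem_Iic.1 hj)).trans hmy.le)]
    simp only [eval_mul, eval_C, eval_comp, eval_sub, eval_X, eval_maternPolynomial]
    ring

theorem StrictMono.infinite_setOf_gap {n : ℕ} {x : Fin n → ℝ} (hx : StrictMono x) (m : Fin n) :
    {y | x m < y ∧ ∀ j, m < j → y < x j}.Infinite := by
  have hgap : ∀ᶠ y in nhdsWithin (x m) (Set.Ioi (x m)), ∀ j, m < j → y < x j := by
    refine Filter.eventually_all.2 fun j => ?_
    by_cases hj : m < j
    · exact ((eventually_lt_nhds (hx hj)).filter_mono nhdsWithin_le_nhds).mono fun y hy _ => hy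
    · exact Filter.Eventually.of_forall fun y h => absurd h hj
  obtain ⟨u, hu, hsub⟩ := mem_nhdsGT_iff_exists_Ioo_subset.1 hgap
  exact (Set.Ioo_infinite hu).mono fun y hy => ⟨hy.1, hsub hy⟩

theorem Finset.eq_zero_of_forall_sum_Iic_eq_zero {α M : Type*} [LinearOrder α]
    [LocallyFiniteOrderBot α] [WellFoundedLT α] [AddCommGroup M] {u : α → M}
    (h : ∀ m, ∑ j ∈ Iic m, u j = 0) (m : α) : u m = 0 := by
  induction m using WellFoundedLT.induction with
  | _ m ih =>
    have hIio : ∑ j ∈ Iio m, u j = 0 := sum_eq_zero fun j hj => ih j (mem_Iio.1 hj)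
    have hm := h m
    rwa [← Iio_insert, sum_insert notMem_Iio_self, hIio, add_zero] at hm

theorem linearIndependent_maternKernel (p : ℕ) {c : ℝ} (hc : c ≠ 0) {n : ℕ} {x : Fin n → ℝ}
    (hx : StrictMono x) : LinearIndependent ℝ fun j y => maternKernel p c y (x j) := by
  classical
  rw [Fintype.linearIndependent_iff]
  intro b hb
  have hprefix : ∀ m, ∑ j ∈ Iic m, C (b j * Real.exp (c * x j)) *
      (maternPolynomial p c).comp (X - C (x j)) = 0 := fun m =>
    (eq_zero_of_eval_mul_exp_add_eval_mul_exp_neg_eq_zero hc (hx.infinite_setOf_gap m)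
      fun y hy => by
        rw [← sum_mul_maternKernel_eq hx.monotone p c b hy.1 hy.2]
        simpa using congrFun hb y).2
  intro j
  have hj := congrArg (eval (x j)) (eq_zero_of_forall_sum_Iic_eq_zero hprefix j)
  simpa [eval_maternPolynomial, maternPoly_zero, Real.exp_ne_zero] using hj

theorem linearIndependent_of_forall_exists_dual_triangular {ι K V : Type*} [LinearOrder ι]
    [Fintype ι] [Field K] [AddCommGroup V] [Module K V] {v : ι → V}
    (h : ∀ i, ∃ f : Module.Dual K V, f (v i) ≠ 0 ∧ ∀ j < i, f (v j) = 0) :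
    LinearIndependent K v := by
  rw [Fintype.linearIndependent_iff]
  intro g hg i
  induction i using WellFoundedGT.induction with
  | _ i ih =>
    obtain ⟨f, hfi, hf⟩ := h i
    have hsum : ∑ j, g j * f (v j) = 0 := by simpa using congrArg f hg
    rw [sum_eq_single i _ (by simp)] at hsum
    · exact (mul_eq_zero.1 hsum).resolve_right hfi
    · intro j _ hji
      rcases hji.lt_or_gt with hji | hji
      · rw [hf j hji, mul_zero]
      · rw [ih j hji, zero_mul]

structure IsKernelPacketMatrix (p : ℕ) (c : ℝ) {n : ℕ} (x : Fin n → ℝ)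
    (A : Fin n → Fin n → ℝ) : Prop where
  window : ∀ i j : Fin n,
    ((j : ℕ) + p + 1 < (i : ℕ) ∨ (i : ℕ) + p + 1 < (j : ℕ)) → A i j = 0
  row_ne_zero : ∀ i, A i ≠ 0
  left : ∀ i : Fin n, (i : ℕ) ≤ p →
    (∀ l ≤ p, ∑ j, A i j * x j ^ l * Real.exp (c * x j) = 0) ∧
    (∀ r : ℕ, r + 1 ≤ (i : ℕ) → ∑ j, A i j * x j ^ r * Real.exp (-(c * x j)) = 0)
  mid : ∀ i : Fin n, p + 1 ≤ (i : ℕ) → (i : ℕ) + p + 2 ≤ n →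
    ∀ l ≤ p, ∀ δ : ℝ, (δ = 1 ∨ δ = -1) →
      ∑ j, A i j * x j ^ l * Real.exp (δ * c * x j) = 0
  right : ∀ i : Fin n, n ≤ (i : ℕ) + p + 1 →
    (∀ l ≤ p, ∑ j, A i j * x j ^ l * Real.exp (-(c * x j)) = 0) ∧
    (∀ r : ℕ, r + (i : ℕ) + 2 ≤ n → ∑ j, A i j * x j ^ r * Real.exp (c * x j) = 0)

namespace IsKernelPacketMatrix

variable {p : ℕ} {c : ℝ} {n : ℕ} {x : Fin n → ℝ} {A : Fin n → Fin n → ℝ}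

theorem sum_mul_pow_mul_exp_eq_zero (hA : IsKernelPacketMatrix p c x A) {i : Fin n} {l : ℕ}
    (hl : l < min (p + 1) (n - 1 - i)) :
    ∑ j, A i j * x j ^ l * Real.exp (c * x j) = 0 := by
  rcases (show (i : ℕ) ≤ p ∨ (p + 1 ≤ i ∧ i + p + 2 ≤ n) ∨ n ≤ i + p + 1 by omega) with
    hi | ⟨hi₁, hi₂⟩ | hi
  · exact (hA.left i hi).1 l (by omega)
  · simpa only [one_mul] using hA.mid i hi₁ hi₂ l (by omega) 1 (Or.inl rfl)
  · exact (hA.right i hi).2 l (by omega)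

theorem sum_mul_pow_mul_exp_neg_eq_zero (hA : IsKernelPacketMatrix p c x A) {i : Fin n}
    {r : ℕ} (hr : r < min (p + 1) i) :
    ∑ j, A i j * x j ^ r * Real.exp (-(c * x j)) = 0 := by
  rcases (show (i : ℕ) ≤ p ∨ (p + 1 ≤ i ∧ i + p + 2 ≤ n) ∨ n ≤ i + p + 1 by omega) with
    hi | ⟨hi₁, hi₂⟩ | hi
  · exact (hA.left i hi).2 r (by omega)
  · simpa only [neg_mul, one_mul] using hA.mid i hi₁ hi₂ r (by omega) (-1) (Or.inr rfl)
  · exact (hA.right i hi).1 r (by omega)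

theorem sum_mul_pow_mul_exp_ne_zero (hA : IsKernelPacketMatrix p c x A) (hc : c ≠ 0)
    (hx : Function.Injective x) {i : Fin n} (hi : n ≤ i + p + 1) :
    ∑ j, A i j * x j ^ (n - 1 - i) * Real.exp (c * x j) ≠ 0 := by
  intro h
  refine hA.row_ne_zero i (eq_zero_of_sum_mul_pow_mul_exp_eq_zero hc hx
    (S := (Ico (i - (p + 1)) n).attachFin fun m hm => (mem_Ico.1 hm).2)
    (a := n - i) (b := min (p + 1) i) (fun j hj => hA.window i j (Or.inl ?_)) ?_
    (fun l hl => ?_) fun r hr => hA.sum_mul_pow_mul_exp_neg_eq_zero hr)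
  · rw [mem_attachFin, mem_Ico] at hj
    omega
  · rw [card_attachFin, Nat.card_Ico]
    omega
  · rcases (show l < n - 1 - i ∨ l = n - 1 - i by omega) with hl | rfl
    · exact hA.sum_mul_pow_mul_exp_eq_zero (by omega)
    · exact h

theorem apply_ne_zero (hA : IsKernelPacketMatrix p c x A) (hc : c ≠ 0)
    (hx : Function.Injective x) {i : Fin n} (hi : i + p + 1 < n) :
    A i ⟨i + p + 1, hi⟩ ≠ 0 := by
  intro h
  refine hA.row_ne_zero i (eq_zero_of_sum_mul_pow_mul_exp_eq_zero hc hx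
    (S := (Ico (i - (p + 1)) (i + p + 1)).attachFin fun m hm => (mem_Ico.1 hm).2.trans hi)
    (a := p + 1) (b := min (p + 1) i) (fun j hj => ?_) ?_
    (fun l hl => hA.sum_mul_pow_mul_exp_eq_zero (by omega))
    fun r hr => hA.sum_mul_pow_mul_exp_neg_eq_zero hr)
  · rw [mem_attachFin, mem_Ico] at hj
    rcases (show (j : ℕ) + p + 1 < i ∨ (j : ℕ) = i + p + 1 ∨ i + p + 1 < (j : ℕ) by omega) with
      hj | hj | hj
    · exact hA.window i j (Or.inl hj)
    · rwa [show j = ⟨i + p + 1, hi⟩ from Fin.ext hj]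
    · exact hA.window i j (Or.inr hj)
  · rw [card_attachFin, Nat.card_Ico]
    omega

theorem linearIndependent (hA : IsKernelPacketMatrix p c x A) (hc : c ≠ 0)
    (hx : Function.Injective x) : LinearIndependent ℝ A := by
  refine linearIndependent_of_forall_exists_dual_triangular fun i => ?_
  by_cases hi : n ≤ i + p + 1
  · refine ⟨Fintype.linearCombination ℝ fun j => x j ^ (n - 1 - i) * Real.exp (c * x j),
      ?_, fun i' hi' => ?_⟩
    · simpa only [Fintype.linearCombination_apply, smul_eq_mul, ← mul_assoc]
        using hA.sum_mul_pow_mul_exp_ne_zero hc hx hi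
    · have hi' : (i' : ℕ) < i := hi'
      simpa only [Fintype.linearCombination_apply, smul_eq_mul, ← mul_assoc]
        using hA.sum_mul_pow_mul_exp_eq_zero (i := i') (by omega)
  · rw [not_le] at hi
    refine ⟨LinearMap.proj ⟨i + p + 1, hi⟩, ?_, fun i' hi' => ?_⟩
    · exact hA.apply_ne_zero hc hx hi
    · have hi' : (i' : ℕ) < i := hi'
      exact hA.window i' _ (Or.inr (by simp only; omega))

end IsKernelPacketMatrix

theorem kp_basis_linear_independent_general
    (p : ℕ) (c : ℝ) (hc : 0 < c)
    (n : ℕ)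
    (x : Fin n → ℝ) (hx : StrictMono x)
    (A : Fin n → Fin n → ℝ)
    (hwindow : ∀ i j : Fin n,
      ((j : ℕ) + p + 1 < (i : ℕ) ∨ (i : ℕ) + p + 1 < (j : ℕ)) → A i j = 0)
    (hnz : ∀ i, A i ≠ 0)
    (hleft : ∀ i : Fin n, (i : ℕ) ≤ p →
      (∀ l ≤ p, ∑ j, A i j * x j ^ l * Real.exp (c * x j) = 0) ∧
      (∀ r : ℕ, r + 1 ≤ (i : ℕ) → ∑ j, A i j * x j ^ r * Real.exp (-(c * x j)) = 0))
    (hmid : ∀ i : Fin n, p + 1 ≤ (i : ℕ) → (i : ℕ) + p + 2 ≤ n →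
      ∀ l ≤ p, ∀ δ : ℝ, (δ = 1 ∨ δ = -1) →
        ∑ j, A i j * x j ^ l * Real.exp (δ * c * x j) = 0)
    (hright : ∀ i : Fin n, n ≤ (i : ℕ) + p + 1 →
      (∀ l ≤ p, ∑ j, A i j * x j ^ l * Real.exp (-(c * x j)) = 0) ∧
      (∀ r : ℕ, r + (i : ℕ) + 2 ≤ n → ∑ j, A i j * x j ^ r * Real.exp (c * x j) = 0))
    (φ : Fin n → ℝ → ℝ)
    (hφ : ∀ i x', φ i x' = ∑ j, A i j * maternKernel p c x' (x j)) :
    LinearIndependent ℝ φ := by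
  have hA : IsKernelPacketMatrix p c x A := ⟨hwindow, hnz, hleft, hmid, hright⟩
  have hK := linearIndependent_maternKernel p hc.ne' hx
  have hφA : φ = Fintype.linearCombination ℝ (fun j y => maternKernel p c y (x j)) ∘ A := by
    ext i y
    simp [hφ, Fintype.linearCombination_apply]
  rw [hφA]
  exact (hA.linearIndependent hc.ne' hx.injective).map' _
    (LinearMap.ker_eq_bot.2 hK.fintypeLinearCombination_injective)

/-- (Linear independence of the KP basis.) Let `p ≥ 0`, `c > 0`,
`k = 2p + 3`, `n ≥ k`, and `x_1 < ⋯ < x_n`. Using `0`-indexing (`i, j : Fin n`), row `i`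
of the coefficient matrix `A` is supported on the window `|i - j| ≤ p + 1` and is nonzero:
* for `i ≤ p` (rows `1, …, (k-1)/2`): `A i` is a nonzero solution of the
  left-sided kernel packet system on `x_0, …, x_{p+1+i}`, i.e.
  `∑_j A i j x_j^l exp(c x_j) = 0` for `l = 0, …, (k-3)/2 = p` and, when the number of
  points `s = p + 2 + i` satisfies `s ≥ (k+3)/2` (i.e. `i ≥ 1`),
  `∑_j A i j x_j^r exp(-c x_j) = 0` for `r = 0, …, s - (k+3)/2 = i - 1`;
* for `p + 1 ≤ i ≤ n - p - 2` (the middle rows): `A i` is a nonzero solution of the kernel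
  packet system on the `k` consecutive points `x_{i-p-1}, …, x_{i+p+1}`, i.e.
  `∑_j A i j x_j^l exp(δ c x_j) = 0` for `l = 0, …, p` and `δ = ±1`;
* for `i ≥ n - p - 1` (rows `n - (k-3)/2, …, n`): `A i` is a nonzero solution of the
  right-sided kernel packet system on `x_{i-p-1}, …, x_{n-1}`, i.e.
  `∑_j A i j x_j^l exp(-c x_j) = 0` for `l = 0, …, p` and, when the number of points
  `s = n - i + p + 1` satisfies `s ≥ (k+3)/2`, `∑_j A i j x_j^r exp(c x_j) = 0` for
  `r = 0, …, s - (k+3)/2 = n - i - 2`.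
Then the functions `φ_i(x) = ∑_j A i j K(x, x_j)` are linearly independent over `ℝ`. -/
theorem kp_basis_linear_independent
    (p : ℕ) (c : ℝ) (hc : 0 < c)
    (n : ℕ) (hn : 2 * p + 3 ≤ n)
    (x : Fin n → ℝ) (hx : StrictMono x)
    (A : Fin n → Fin n → ℝ)
    (hwindow : ∀ i j : Fin n,
      ((j : ℕ) + p + 1 < (i : ℕ) ∨ (i : ℕ) + p + 1 < (j : ℕ)) → A i j = 0)
    (hnz : ∀ i, A i ≠ 0)
    (hleft : ∀ i : Fin n, (i : ℕ) ≤ p →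
      (∀ l ≤ p, ∑ j, A i j * x j ^ l * Real.exp (c * x j) = 0) ∧
      (∀ r : ℕ, r + 1 ≤ (i : ℕ) → ∑ j, A i j * x j ^ r * Real.exp (-(c * x j)) = 0))
    (hmid : ∀ i : Fin n, p + 1 ≤ (i : ℕ) → (i : ℕ) + p + 2 ≤ n →
      ∀ l ≤ p, ∀ δ : ℝ, (δ = 1 ∨ δ = -1) →
        ∑ j, A i j * x j ^ l * Real.exp (δ * c * x j) = 0)
    (hright : ∀ i : Fin n, n ≤ (i : ℕ) + p + 1 →
      (∀ l ≤ p, ∑ j, A i j * x j ^ l * Real.exp (-(c * x j)) = 0) ∧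
      (∀ r : ℕ, r + (i : ℕ) + 2 ≤ n → ∑ j, A i j * x j ^ r * Real.exp (c * x j) = 0))
    (φ : Fin n → ℝ → ℝ)
    (hφ : ∀ i x', φ i x' = ∑ j, A i j * maternKernel p c x' (x j)) :
    LinearIndependent ℝ φ :=
  kp_basis_linear_independent_general p c hc n x hx A hwindow hnz hleft hmid hright φ hφ
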